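/- Let G be a graph, B a PSD forcing set, F a relaxed chronology of PSD forces of B on G, x a vertex of G, and Q the path bundle of F induced by x. Then Q is a rigid linkage of G. -/

import Mathlib

namespace ZF

variable {V : Type*} [Fintype V] [DecidableEq V]

/-- A valid standard zero forcing force within the vertex set `U`, given blue set `B`:
`u` is blue, `v` is its unique white neighbor in `U`. -/
def ZFValid (G : SimpleGraph V) (U B : Set V) (u v : V) : Prop :=
  u ∈ U ∧ v ∈ U ∧ u ∈ B ∧ v ∉ B ∧ G.Adj u v ∧
    ∀ w ∈ U, G.Adj u w → w ∉ B → w = v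

/-- `whiteConn G U B a b` : `a` and `b` are joined by a walk through white
(non-blue) vertices of `U` (possibly trivial). -/
def whiteConn (G : SimpleGraph V) (U B : Set V) : V → V → Prop :=
  Relation.ReflTransGen (fun a b => G.Adj a b ∧ a ∈ U ∧ b ∈ U ∧ a ∉ B ∧ b ∉ B)

/-- A valid PSD force within the vertex set `U`, given blue set `B`:
`u` is blue and `v` is the unique neighbor of `u` in the component of the
white subgraph containing `v`. -/
def PSDValid (G : SimpleGraph V) (U B : Set V) (u v : V) : Prop :=
  u ∈ U ∧ v ∈ U ∧ u ∈ B ∧ v ∉ B ∧ G.Adj u v ∧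
    ∀ w ∈ U, G.Adj u w → w ∉ B → whiteConn G U B v w → w = v

/-- One propagation step for a generic color change rule `valid`. -/
def step (valid : Set V → V → V → Prop) (B : Set V) : Set V :=
  B ∪ {v | ∃ u, valid B u v}

/-- Iterated propagation. -/
def iter (valid : Set V → V → V → Prop) (B : Set V) : ℕ → Set V :=
  fun k => (step valid)^[k] B

/-- `B ⊆ U` is a forcing set of the induced subgraph on `U` for the rule `valid`. -/
def IsForcingSet (valid : Set V → V → V → Prop) (U B : Set V) : Prop :=
  B ⊆ U ∧ ∃ k, U ⊆ iter valid B k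

/-- Propagation time of the set `B` for rule `valid` on the induced subgraph on `U`. -/
noncomputable def propTime (valid : Set V → V → V → Prop) (U B : Set V) : ℕ :=
  sInf {k | U ⊆ iter valid B k}

/-- Vertices blue after `k` time-steps of the family of forces `F`, starting from `B`. -/
def expand (B : Set V) (F : ℕ → Set (V × V)) : ℕ → Set V
  | 0 => B
  | k + 1 => expand B F k ∪ {v | ∃ u, (u, v) ∈ F (k + 1)}

/-- A relaxed chronology of forces (for the rule `valid`) for the forcing set `B`
on the induced subgraph on `U`, with completion time `K`: at each time-step an
arbitrary subset of the currently valid forces is performed (no vertex being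
forced twice in one step), and all of `U` is blue after step `K`. -/
structure RelaxedChron (valid : Set V → V → V → Prop) (U B : Set V)
    (K : ℕ) (F : ℕ → Set (V × V)) : Prop where
  subset : B ⊆ U
  init : F 0 = ∅
  bound : ∀ k, K < k → F k = ∅
  forcesValid : ∀ k < K, ∀ u v, (u, v) ∈ F (k + 1) → valid (expand B F k) u v
  uniqueForcer : ∀ k u₁ u₂ v, (u₁, v) ∈ F k → (u₂, v) ∈ F k → u₁ = u₂
  complete : U ⊆ expand B F K

/-- The underlying set of forces of a relaxed chronology. -/
def forcesOf (F : ℕ → Set (V × V)) (K : ℕ) : Set (V × V) :=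
  {p | ∃ k, 1 ≤ k ∧ k ≤ K ∧ p ∈ F k}

/-- The terminus of a relaxed chronology: the vertices (of `U`) performing no force. -/
def terminus (U : Set V) (F : ℕ → Set (V × V)) (K : ℕ) : Set V :=
  {v ∈ U | ∀ u, (v, u) ∉ forcesOf F K}

/-- The reversal of a relaxed chronology: each force is reversed and
the order of the time-steps is reversed. -/
def revChron (F : ℕ → Set (V × V)) (K : ℕ) : ℕ → Set (V × V) :=
  fun k => if 1 ≤ k ∧ k ≤ K then {p | (p.2, p.1) ∈ F (K - k + 1)} else ∅

/-- One round of performing all currently valid forces from the set of forces `S`. -/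
def forceStep (valid : Set V → V → V → Prop) (S : Set (V × V)) (B : Set V) : Set V :=
  B ∪ {v | ∃ u, (u, v) ∈ S ∧ valid B u v}

def forceIter (valid : Set V → V → V → Prop) (S : Set (V × V)) (B : Set V) : ℕ → Set V :=
  fun t => (forceStep valid S)^[t] B

/-- Propagation time of a set of forces `S` for starting set `B` on `U`. -/
noncomputable def ptForces (valid : Set V → V → V → Prop) (U : Set V)
    (S : Set (V × V)) (B : Set V) : ℕ :=
  sInf {t | U ⊆ forceIter valid S B t}

/-- `v` is active at time-step `k` of the relaxed chronology `F`:
it is blue after step `k` and has not yet performed a force. -/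
def activeAt (B : Set V) (F : ℕ → Set (V × V)) (v : V) (k : ℕ) : Prop :=
  v ∈ expand B F k ∧ ∀ j ≤ k, ∀ u, (v, u) ∉ F j

/-- The zero forcing number. -/
noncomputable def Z (G : SimpleGraph V) : ℕ :=
  sInf {n | ∃ B : Set V, B.ncard = n ∧ IsForcingSet (ZFValid G Set.univ) Set.univ B}

/-- The PSD forcing number. -/
noncomputable def Zplus (G : SimpleGraph V) : ℕ :=
  sInf {n | ∃ B : Set V, B.ncard = n ∧ IsForcingSet (PSDValid G Set.univ) Set.univ B}

/-- Standard `m`-propagation time `pt(G,m)`. -/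
noncomputable def ptm (G : SimpleGraph V) (m : ℕ) : ℕ :=
  sInf {t | ∃ B : Set V, B.ncard = m ∧ IsForcingSet (ZFValid G Set.univ) Set.univ B ∧
    propTime (ZFValid G Set.univ) Set.univ B = t}

/-- PSD `m`-propagation time `pt₊(G,m)`. -/
noncomputable def ptplusm (G : SimpleGraph V) (m : ℕ) : ℕ :=
  sInf {t | ∃ B : Set V, B.ncard = m ∧ IsForcingSet (PSDValid G Set.univ) Set.univ B ∧
    propTime (PSDValid G Set.univ) Set.univ B = t}

/-- Standard propagation time `pt(G)`. -/
noncomputable def pt (G : SimpleGraph V) : ℕ := ptm G (Z G)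

/-- PSD propagation time `pt₊(G)`. -/
noncomputable def ptplus (G : SimpleGraph V) : ℕ := ptplusm G (Zplus G)

/-- PSD throttling number `thr₊(G)`. -/
noncomputable def thrplus (G : SimpleGraph V) : ℕ :=
  sInf {t | ∃ B : Set V, IsForcingSet (PSDValid G Set.univ) Set.univ B ∧
    t = B.ncard + propTime (PSDValid G Set.univ) Set.univ B}

/-- Closed neighborhood of a set. -/
def closedNbhd (G : SimpleGraph V) (B : Set V) : Set V :=
  B ∪ {v | ∃ u ∈ B, G.Adj u v}

/-- Power domination process: the first step colors the closed neighborhood,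
subsequent steps apply the standard zero forcing rule. -/
def pdIter (G : SimpleGraph V) (B : Set V) : ℕ → Set V
  | 0 => B
  | 1 => closedNbhd G B
  | (k + 2) => step (ZFValid G Set.univ) (pdIter G B (k + 1))

/-- `B` is a power dominating set. -/
def IsPDSet (G : SimpleGraph V) (B : Set V) : Prop :=
  ∃ k, Set.univ ⊆ pdIter G B k

/-- Power propagation time of a set. -/
noncomputable def pdPropTime (G : SimpleGraph V) (B : Set V) : ℕ :=
  sInf {k | Set.univ ⊆ pdIter G B k}

/-- Power `m`-propagation time `ppt(G,m)`. -/
noncomputable def pptm (G : SimpleGraph V) (m : ℕ) : ℕ :=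
  sInf {t | ∃ B : Set V, B.ncard = m ∧ IsPDSet G B ∧ pdPropTime G B = t}

/-- Restriction of a family of forces to those with both endpoints in `W`. -/
def restrictF (F : ℕ → Set (V × V)) (W : Set V) : ℕ → Set (V × V) :=
  fun k => {p ∈ F k | p.1 ∈ W ∧ p.2 ∈ W}

/-- The forcing tree of `b` : all vertices reachable from `b` by a chain of forces in `S`. -/
def treeOf (S : Set (V × V)) (b : V) : Set V :=
  {w | Relation.ReflTransGen (fun a c => (a, c) ∈ S) b w}

open Classical in
/-- The endpoint, after `k` steps, of the path grown from `b ∈ B` in the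
path bundle of the relaxed chronology `F` induced by the vertex `x`: the path is
extended by a force from its current endpoint into the component of white
vertices containing `x`, whenever such a force occurs. -/
noncomputable def lastVert (G : SimpleGraph V) (B : Set V) (F : ℕ → Set (V × V))
    (x : V) (b : V) : ℕ → V
  | 0 => b
  | k + 1 =>
    if h : ∃ w, (lastVert G B F x b k, w) ∈ F (k + 1) ∧ x ∉ expand B F k ∧
        whiteConn G Set.univ (expand B F k) x w
    then h.choose else lastVert G B F x b k

/-- The vertex set of the path bundle of `F` induced by `x`. -/
def bundle (G : SimpleGraph V) (B : Set V) (F : ℕ → Set (V × V)) (x : V) (K : ℕ) : Set V :=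
  {v | ∃ b ∈ B, ∃ j ≤ K, lastVert G B F x b j = v}

/-- The path of the bundle grown from `b`, as a list of vertices. -/
noncomputable def bundlePath (G : SimpleGraph V) (B : Set V) (F : ℕ → Set (V × V))
    (x : V) (K : ℕ) (b : V) : List V :=
  ((List.range (K + 1)).map (lastVert G B F x b)).dedup

/-- A nonempty path in `G`, given as a list of distinct consecutively adjacent vertices. -/
def IsPathList (G : SimpleGraph V) (l : List V) : Prop :=
  l ≠ [] ∧ l.Nodup ∧ l.Chain' G.Adj

/-- `P` is an `(α,β)`-linkage: a collection of pairwise vertex-disjoint paths,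
`α` consisting of one endpoint of each path and `β` of the other endpoints. -/
def IsLinkage (G : SimpleGraph V) (α β : Set V) (P : Set (List V)) : Prop :=
  (∀ l ∈ P, IsPathList G l) ∧
  (∀ l ∈ P, ∀ l' ∈ P, l ≠ l' → ∀ v, v ∈ l → v ∉ l') ∧
  (∀ l ∈ P, ∀ l' ∈ P, l.head? = l'.head? → l = l') ∧
  (∀ l ∈ P, ∀ l' ∈ P, l.getLast? = l'.getLast? → l = l') ∧
  α = {v | ∃ l ∈ P, l.head? = some v} ∧
  β = {v | ∃ l ∈ P, l.getLast? = some v}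

/-- `P` is a rigid linkage: for some `α`, `β` it is the unique `(α,β)`-linkage in `G`. -/
def IsRigidLinkage (G : SimpleGraph V) (P : Set (List V)) : Prop :=
  ∃ α β, IsLinkage G α β P ∧ ∀ P', IsLinkage G α β P' → P' = P

/-- A path cover of `G` : `m` vertex-disjoint induced paths covering all vertices,
the `i`-th path having vertices `vtx i 0, …, vtx i (n i − 1)` in path order. -/
structure IsPathCover (G : SimpleGraph V) (m : ℕ) (n : Fin m → ℕ)
    (vtx : (i : Fin m) → Fin (n i) → V) : Prop where
  pos : ∀ i, 0 < n i
  inj : Function.Injective (fun p : (i : Fin m) × Fin (n i) => vtx p.1 p.2)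
  cover : ∀ v : V, ∃ i j, vtx i j = v
  induced : ∀ i (j j' : Fin (n i)),
    G.Adj (vtx i j) (vtx i j') ↔ ((j : ℕ) + 1 = (j' : ℕ) ∨ (j' : ℕ) + 1 = (j : ℕ))

/-- A witness that a path cover is a parallel increasing path cover: a collection of
block partitions of `{0,…,K}`, one per path, compatible with the edges of `G`. -/
structure IsPIPWitness (G : SimpleGraph V) (m : ℕ) (n : Fin m → ℕ)
    (vtx : (i : Fin m) → Fin (n i) → V) (K : ℕ)
    (A : (i : Fin m) → Fin (n i) → Finset ℕ) : Prop where
  mem : ∀ i j, A i j ⊆ Finset.range (K + 1)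
  nonempty : ∀ i j, (A i j).Nonempty
  partition : ∀ i, ∀ x ∈ Finset.range (K + 1), ∃! j, x ∈ A i j
  mono : ∀ i (j j' : Fin (n i)), (j : ℕ) < (j' : ℕ) → ∀ x ∈ A i j, ∀ y ∈ A i j', x < y
  edge : ∀ (i i' : Fin m) j j', i ≠ i' →
    G.Adj (vtx i j) (vtx i' j') → ((A i j) ∩ (A i' j')).Nonempty

/-- A parallel increasing path cover of `G`. -/
def IsPIP (G : SimpleGraph V) (m : ℕ) (n : Fin m → ℕ)
    (vtx : (i : Fin m) → Fin (n i) → V) : Prop :=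
  IsPathCover G m n vtx ∧ ∃ K A, IsPIPWitness G m n vtx K A

/-- The path cover given by `vtx` is the chain set of the family of forces `F` :
the underlying forces are exactly the consecutive pairs along the paths. -/
def IsChainSetOf (m : ℕ) (n : Fin m → ℕ) (vtx : (i : Fin m) → Fin (n i) → V)
    (F : ℕ → Set (V × V)) (K : ℕ) : Prop :=
  ∀ u w, (u, w) ∈ forcesOf F K ↔
    ∃ (i : Fin m) (j : Fin (n i)) (j' : Fin (n i)),
      u = vtx i j ∧ w = vtx i j' ∧ (j : ℕ) + 1 = (j' : ℕ)

end ZF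

/-! Let `T` be the first time `x` turns blue. Before `T`, a bundle path only moves along a force
into the white component of `x`, and the PSD rule makes that move unique: the new vertex is
the only neighbour of the old endpoint in that component. Hence every force into the
component is a bundle step, the bundle paths never meet, and they form a linkage from `B` to
their final endpoints.

For rigidity take any linkage with the same endpoint sets. By induction on `t ≤ T`, the path
starting at `b` is the bundle path of `b` up to time `t` followed by vertices white at time
`t`. Those vertices are joined to `x` by white vertices, because the path ends at a bundle
endpoint, which is white at time `t` only inside the component of `x`; so the PSD rule forces
the next bundle vertex to be the next vertex on the path, and a vertex of the white tail that
turns blue must be that one. At time `T` the white tail is empty, since a white bundle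
endpoint would make `x` white. -/

namespace List

variable {α : Type*} [DecidableEq α] {f : ℕ → α} {n : ℕ}

theorem dedup_map_range_succ_succ_of_eq (h : f (n + 1) = f n) :
    ((range (n + 2)).map f).dedup = ((range (n + 1)).map f).dedup := by
  rw [range_succ, range_succ, map_append, map_append, map_singleton, map_singleton, h,
    append_assoc, dedup_append, dedup_append (map f (range n)) [f n]]
  simp

theorem dedup_map_range_succ_succ_of_forall_ne (h : ∀ j ≤ n, f (n + 1) ≠ f j) :
    ((range (n + 2)).map f).dedup = ((range (n + 1)).map f).dedup ++ [f (n + 1)] := by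
  rw [range_succ (n := n + 1), map_append, map_singleton, Disjoint.dedup_append]
  · rfl
  · simpa [Nat.lt_succ_iff, eq_comm] using h

end List

namespace ZF

variable {V : Type*} {G : SimpleGraph V}

section WhiteConn

variable {U C : Set V} {a b : V}

theorem whiteConn_symm (h : whiteConn G U C a b) : whiteConn G U C b a := by
  induction h with
  | refl => exact .refl
  | tail _ hst ih => exact ih.head ⟨hst.1.symm, hst.2.2.1, hst.2.1, hst.2.2.2.2, hst.2.2.2.1⟩

theorem whiteConn_anti {D : Set V} (hCD : C ⊆ D) (h : whiteConn G U D a b) :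
    whiteConn G U C a b :=
  Relation.ReflTransGen.mono (fun _ _ hst => ⟨hst.1, hst.2.1, hst.2.2.1,
    fun h => hst.2.2.2.1 (hCD h), fun h => hst.2.2.2.2 (hCD h)⟩) _ _ h

theorem whiteConn_getLast_of_isChain {l : List V} (hl : l.IsChain G.Adj) (hU : ∀ z ∈ l, z ∈ U)
    (hC : ∀ z ∈ l, z ∉ C) (hne : l ≠ []) : ∀ z ∈ l, whiteConn G U C z (l.getLast hne) :=
  (hl.imp_of_mem_imp fun a b ha hb hab => ⟨hab, hU a ha, hU b hb, hC a ha, hC b hb⟩)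
    |>.backwards_induction _ _ (fun _ _ hst h => h.head hst) fun _ => .refl

end WhiteConn

section Chronology

variable {B : Set V} {K : ℕ} {F : ℕ → Set (V × V)}

theorem expand_mono : Monotone (expand B F) :=
  monotone_nat_of_le_succ fun _ => Set.subset_union_left

theorem mem_expand_succ_of_mem {k : ℕ} {u v : V} (h : (u, v) ∈ F (k + 1)) :
    v ∈ expand B F (k + 1) :=
  Set.mem_union_right _ ⟨u, h⟩

theorem mem_or_exists_forced_of_mem_expand {z : V} {t : ℕ} (hz : z ∈ expand B F t) :
    z ∈ B ∨ ∃ s < t, z ∉ expand B F s ∧ ∃ u, (u, z) ∈ F (s + 1) := by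
  induction t with
  | zero => exact .inl hz
  | succ t ih =>
    by_cases hzt : z ∈ expand B F t
    · exact (ih hzt).imp_right fun ⟨s, hst, hs⟩ => ⟨s, by omega, hs⟩
    · obtain hz | hforced := hz
      · exact absurd hz hzt
      · exact .inr ⟨t, t.lt_succ_self, hzt, hforced⟩

theorem RelaxedChron.le_of_mem {valid : Set V → V → V → Prop} {U : Set V}
    (hF : RelaxedChron valid U B K F) {k : ℕ} {p : V × V} (hp : p ∈ F k) : k ≤ K := by
  by_contra hk
  rw [hF.bound k (by omega)] at hp
  exact hp

theorem RelaxedChron.valid_of_mem {valid : Set V → V → V → Prop} {U : Set V}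
    (hF : RelaxedChron valid U B K F) {k : ℕ} {u v : V} (h : (u, v) ∈ F (k + 1)) :
    valid (expand B F k) u v :=
  hF.forcesValid k (hF.le_of_mem h) u v h

end Chronology

section Dynamics

variable [Fintype V] {B : Set V} {K : ℕ} {F : ℕ → Set (V × V)} {x b : V} {k : ℕ}

theorem lastVert_succ_of_not_exists
    (h : ¬ ∃ w, (lastVert G B F x b k, w) ∈ F (k + 1) ∧ x ∉ expand B F k ∧
      whiteConn G Set.univ (expand B F k) x w) :
    lastVert G B F x b (k + 1) = lastVert G B F x b k := by
  rw [lastVert, dif_neg h]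

theorem lastVert_succ_spec
    (h : ∃ w, (lastVert G B F x b k, w) ∈ F (k + 1) ∧ x ∉ expand B F k ∧
      whiteConn G Set.univ (expand B F k) x w) :
    (lastVert G B F x b k, lastVert G B F x b (k + 1)) ∈ F (k + 1) ∧ x ∉ expand B F k ∧
      whiteConn G Set.univ (expand B F k) x (lastVert G B F x b (k + 1)) := by
  rw [lastVert, dif_pos h]
  exact h.choose_spec

theorem lastVert_succ_spec_of_ne (h : lastVert G B F x b (k + 1) ≠ lastVert G B F x b k) :
    (lastVert G B F x b k, lastVert G B F x b (k + 1)) ∈ F (k + 1) ∧ x ∉ expand B F k ∧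
      whiteConn G Set.univ (expand B F k) x (lastVert G B F x b (k + 1)) :=
  lastVert_succ_spec (not_not.mp (mt lastVert_succ_of_not_exists h))

theorem lastVert_succ_eq_of_mem_expand (hx : x ∈ expand B F k) :
    lastVert G B F x b (k + 1) = lastVert G B F x b k :=
  lastVert_succ_of_not_exists fun ⟨_, _, hx', _⟩ => hx' hx

theorem lastVert_mem_expand (hb : b ∈ B) (t : ℕ) : lastVert G B F x b t ∈ expand B F t := by
  induction t with
  | zero => exact hb
  | succ t ih =>
    by_cases hmv : lastVert G B F x b (t + 1) = lastVert G B F x b t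
    · exact hmv ▸ expand_mono t.le_succ ih
    · exact mem_expand_succ_of_mem (lastVert_succ_spec_of_ne hmv).1

theorem lastVert_succ_notMem_expand (hF : RelaxedChron (PSDValid G Set.univ) Set.univ B K F)
    (h : lastVert G B F x b (k + 1) ≠ lastVert G B F x b k) :
    lastVert G B F x b (k + 1) ∉ expand B F k :=
  (hF.valid_of_mem (lastVert_succ_spec_of_ne h).1).2.2.2.1

theorem lastVert_succ_eq_iff (hF : RelaxedChron (PSDValid G Set.univ) Set.univ B K F)
    (hb : b ∈ B) :
    lastVert G B F x b (k + 1) = lastVert G B F x b k ↔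
      lastVert G B F x b (k + 1) ∈ expand B F k :=
  ⟨fun h => h ▸ lastVert_mem_expand hb k,
    fun h => by_contra fun hne => lastVert_succ_notMem_expand hF hne h⟩

theorem lastVert_succ_eq_of_mem (hF : RelaxedChron (PSDValid G Set.univ) Set.univ B K F)
    {z : V} (hz : (lastVert G B F x b k, z) ∈ F (k + 1)) (hx : x ∉ expand B F k)
    (hxz : whiteConn G Set.univ (expand B F k) x z) : lastVert G B F x b (k + 1) = z := by
  obtain ⟨hw, -, hxw⟩ := lastVert_succ_spec ⟨z, hz, hx, hxz⟩
  have hvz := hF.valid_of_mem hz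
  exact ((hF.valid_of_mem hw).2.2.2.2.2 z trivial hvz.2.2.2.2.1 hvz.2.2.2.1
    ((whiteConn_symm hxw).trans hxz)).symm

theorem lastVert_notMem_expand_of_ne (hF : RelaxedChron (PSDValid G Set.univ) Set.univ B K F)
    {i j : ℕ} (hij : i ≤ j) (hne : lastVert G B F x b j ≠ lastVert G B F x b i) :
    lastVert G B F x b j ∉ expand B F i := by
  induction j, hij using Nat.le_induction with
  | base => exact absurd rfl hne
  | succ j hij ih =>
    by_cases hmv : lastVert G B F x b (j + 1) = lastVert G B F x b j
    · rw [hmv] at hne ⊢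
      exact ih hne
    · exact fun h => lastVert_succ_notMem_expand hF hmv (expand_mono hij h)

theorem lastVert_eq_of_le_of_le (hF : RelaxedChron (PSDValid G Set.univ) Set.univ B K F)
    (hb : b ∈ B) {i j l : ℕ} (hij : i ≤ j) (hjl : j ≤ l)
    (h : lastVert G B F x b i = lastVert G B F x b l) :
    lastVert G B F x b j = lastVert G B F x b i := by
  by_contra hne
  exact lastVert_notMem_expand_of_ne hF hjl (h ▸ Ne.symm hne)
    (expand_mono hij (h ▸ lastVert_mem_expand hb i))

theorem lastVert_injOn (hF : RelaxedChron (PSDValid G Set.univ) Set.univ B K F) (k : ℕ) :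
    Set.InjOn (fun b => lastVert G B F x b k) B := by
  induction k with
  | zero => exact fun _ _ _ _ h => h
  | succ k ih =>
    intro b hb b' hb' (h : lastVert G B F x b (k + 1) = lastVert G B F x b' (k + 1))
    refine ih hb hb' (show lastVert G B F x b k = lastVert G B F x b' k from ?_)
    by_cases hv : lastVert G B F x b (k + 1) ∈ expand B F k
    · rw [← (lastVert_succ_eq_iff hF hb).2 hv, ← (lastVert_succ_eq_iff hF hb').2 (h ▸ hv), h]
    · have hmv := mt (lastVert_succ_eq_iff hF hb).1 hv
      have hmv' := mt (lastVert_succ_eq_iff hF hb').1 (h ▸ hv)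
      exact hF.uniqueForcer _ _ _ _ (lastVert_succ_spec_of_ne hmv).1
        (h ▸ (lastVert_succ_spec_of_ne hmv').1)

theorem eq_of_lastVert_eq (hF : RelaxedChron (PSDValid G Set.univ) Set.univ B K F)
    {b' : V} (hb : b ∈ B) (hb' : b' ∈ B) {i j : ℕ}
    (h : lastVert G B F x b i = lastVert G B F x b' j) : b = b' := by
  wlog hij : i ≤ j generalizing b b' i j
  · exact (this hb' hb h.symm (by omega)).symm
  by_cases hc : lastVert G B F x b' j = lastVert G B F x b' i
  · exact lastVert_injOn hF i hb hb' (h.trans hc)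
  · exact absurd (h ▸ lastVert_mem_expand hb i) (lastVert_notMem_expand_of_ne hF hij hc)

/-- By the PSD rule, `z` is the only vertex the path could move to, and `z` is still white. -/
theorem lastVert_eq_of_adj_whiteConn (hF : RelaxedChron (PSDValid G Set.univ) Set.univ B K F)
    {m t : ℕ} (hmt : m ≤ t) {z : V} (hadj : G.Adj (lastVert G B F x b m) z)
    (hz : z ∉ expand B F t) (hxz : whiteConn G Set.univ (expand B F t) x z) :
    lastVert G B F x b t = lastVert G B F x b m := by
  induction t, hmt using Nat.le_induction with
  | base => rfl
  | succ t hmt ih =>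
    have hsub : expand B F t ⊆ expand B F (t + 1) := expand_mono t.le_succ
    have hzt : z ∉ expand B F t := fun h => hz (hsub h)
    have hmt := ih hzt (whiteConn_anti hsub hxz)
    by_contra hmv
    rw [← hmt] at hmv hadj
    obtain ⟨hw, -, hxw⟩ := lastVert_succ_spec_of_ne hmv
    have hzw := (hF.valid_of_mem hw).2.2.2.2.2 z trivial hadj hzt
      ((whiteConn_symm hxw).trans (whiteConn_anti hsub hxz))
    exact hz (hzw ▸ mem_expand_succ_of_mem hw)

theorem whiteConn_lastVert_of_notMem (hb : b ∈ B) {j t : ℕ}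
    (h : lastVert G B F x b j ∉ expand B F t) :
    x ∉ expand B F t ∧ whiteConn G Set.univ (expand B F t) x (lastVert G B F x b j) := by
  induction j with
  | zero => exact absurd (expand_mono t.zero_le hb) h
  | succ j ih =>
    by_cases hmv : lastVert G B F x b (j + 1) = lastVert G B F x b j
    · rw [hmv] at h ⊢
      exact ih h
    · obtain ⟨hw, hx, hxw⟩ := lastVert_succ_spec_of_ne hmv
      have hsub : expand B F t ⊆ expand B F j := expand_mono <| by
        by_contra htj
        exact h (expand_mono (by omega) (mem_expand_succ_of_mem hw))
      exact ⟨fun h => hx (hsub h), whiteConn_anti hsub hxw⟩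

theorem exists_lastVert_eq_of_mem (hF : RelaxedChron (PSDValid G Set.univ) Set.univ B K F)
    {t : ℕ} {u z : V} (hx : x ∉ expand B F t) (hf : (u, z) ∈ F (t + 1))
    (hxz : whiteConn G Set.univ (expand B F t) x z) :
    ∃ b ∈ B, lastVert G B F x b t = u ∧ lastVert G B F x b (t + 1) = z := by
  induction t using Nat.strong_induction_on generalizing u z with
  | _ t ih =>
    obtain ⟨-, -, hu, hz, hadj, -⟩ := hF.valid_of_mem hf
    obtain ⟨b, hb, m, hmt, hbm⟩ : ∃ b ∈ B, ∃ m ≤ t, lastVert G B F x b m = u := by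
      rcases mem_or_exists_forced_of_mem_expand hu with huB | ⟨s, hst, hus, p, hp⟩
      · exact ⟨u, huB, 0, t.zero_le, rfl⟩
      · have hsub : expand B F s ⊆ expand B F t := expand_mono hst.le
        have hxu : whiteConn G Set.univ (expand B F s) x u := (whiteConn_anti hsub hxz).tail
          ⟨hadj.symm, trivial, trivial, fun h => hz (hsub h), hus⟩
        obtain ⟨b, hb, -, hbu⟩ := ih s hst (fun h => hx (hsub h)) hp hxu
        exact ⟨b, hb, s + 1, hst, hbu⟩
    have hbt : lastVert G B F x b t = u :=
      (lastVert_eq_of_adj_whiteConn hF hmt (hbm ▸ hadj) hz hxz).trans hbm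
    exact ⟨b, hb, hbt, lastVert_succ_eq_of_mem hF (hbt ▸ hf) hx hxz⟩

end Dynamics

section BundlePath

variable [Fintype V] [DecidableEq V] {B : Set V} {K : ℕ} {F : ℕ → Set (V × V)} {x b : V}
  {t : ℕ}

theorem bundlePath_succ_of_eq (h : lastVert G B F x b (t + 1) = lastVert G B F x b t) :
    bundlePath G B F x (t + 1) b = bundlePath G B F x t b :=
  List.dedup_map_range_succ_succ_of_eq h

theorem bundlePath_succ_of_ne (hF : RelaxedChron (PSDValid G Set.univ) Set.univ B K F)
    (hb : b ∈ B) (h : lastVert G B F x b (t + 1) ≠ lastVert G B F x b t) :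
    bundlePath G B F x (t + 1) b = bundlePath G B F x t b ++ [lastVert G B F x b (t + 1)] :=
  List.dedup_map_range_succ_succ_of_forall_ne fun j hj heq =>
    lastVert_succ_notMem_expand hF h (heq ▸ expand_mono hj (lastVert_mem_expand hb j))

theorem mem_bundlePath {v : V} :
    v ∈ bundlePath G B F x t b ↔ ∃ j ≤ t, lastVert G B F x b j = v := by
  simp [bundlePath]

theorem head?_bundlePath (hF : RelaxedChron (PSDValid G Set.univ) Set.univ B K F)
    (hb : b ∈ B) : (bundlePath G B F x t b).head? = some b := by
  induction t with
  | zero => rfl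
  | succ t ih =>
    by_cases hmv : lastVert G B F x b (t + 1) = lastVert G B F x b t
    · rwa [bundlePath_succ_of_eq hmv]
    · rw [bundlePath_succ_of_ne hF hb hmv, List.head?_append, ih]
      rfl

theorem getLast?_bundlePath (hF : RelaxedChron (PSDValid G Set.univ) Set.univ B K F)
    (hb : b ∈ B) : (bundlePath G B F x t b).getLast? = some (lastVert G B F x b t) := by
  induction t with
  | zero => rfl
  | succ t ih =>
    by_cases hmv : lastVert G B F x b (t + 1) = lastVert G B F x b t
    · rwa [bundlePath_succ_of_eq hmv, hmv]
    · rw [bundlePath_succ_of_ne hF hb hmv, List.getLast?_concat]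

theorem isChain_bundlePath (hF : RelaxedChron (PSDValid G Set.univ) Set.univ B K F)
    (hb : b ∈ B) : (bundlePath G B F x t b).IsChain G.Adj := by
  induction t with
  | zero => exact List.isChain_singleton b
  | succ t ih =>
    by_cases hmv : lastVert G B F x b (t + 1) = lastVert G B F x b t
    · rwa [bundlePath_succ_of_eq hmv]
    · rw [bundlePath_succ_of_ne hF hb hmv]
      refine ih.append (List.isChain_singleton _) fun u hu v hv => ?_
      rw [getLast?_bundlePath hF hb, Option.mem_some_iff] at hu
      rw [List.head?_singleton, Option.mem_some_iff] at hv
      subst hu hv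
      exact (hF.valid_of_mem (lastVert_succ_spec_of_ne hmv).1).2.2.2.2.1

theorem isPathList_bundlePath (hF : RelaxedChron (PSDValid G Set.univ) Set.univ B K F)
    (hb : b ∈ B) : IsPathList G (bundlePath G B F x t b) :=
  ⟨List.ne_nil_of_mem (mem_bundlePath.2 ⟨0, t.zero_le, rfl⟩), List.nodup_dedup _,
    isChain_bundlePath hF hb⟩

theorem bundlePath_eq_of_mem_expand {T : ℕ} (hx : x ∈ expand B F T) (hTt : T ≤ t) :
    bundlePath G B F x t b = bundlePath G B F x T b := by
  induction t, hTt using Nat.le_induction with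
  | base => rfl
  | succ t hTt ih =>
    rw [bundlePath_succ_of_eq (lastVert_succ_eq_of_mem_expand (expand_mono hTt hx)), ih]

end BundlePath

section Linkage

variable [Fintype V] [DecidableEq V] {B : Set V} {K : ℕ} {F : ℕ → Set (V × V)} {x : V}

def bundleEnds (G : SimpleGraph V) (B : Set V) (F : ℕ → Set (V × V)) (x : V) (K : ℕ) :
    Set V :=
  (fun b => lastVert G B F x b K) '' B

theorem bundle_isLinkage (hF : RelaxedChron (PSDValid G Set.univ) Set.univ B K F) :
    IsLinkage G B (bundleEnds G B F x K) ((fun b => bundlePath G B F x K b) '' B) := by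
  refine ⟨?_, ?_, ?_, ?_, ?_, ?_⟩
  · rintro _ ⟨b, hb, rfl⟩
    exact isPathList_bundlePath hF hb
  · rintro _ ⟨b, hb, rfl⟩ _ ⟨b', hb', rfl⟩ hne v hv hv'
    obtain ⟨j, -, rfl⟩ := mem_bundlePath.1 hv
    obtain ⟨j', -, hj'⟩ := mem_bundlePath.1 hv'
    exact hne (congrArg _ (eq_of_lastVert_eq hF hb hb' hj'.symm))
  · rintro _ ⟨b, hb, rfl⟩ _ ⟨b', hb', rfl⟩ h
    rw [head?_bundlePath hF hb, head?_bundlePath hF hb', Option.some_inj] at h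
    rw [h]
  · rintro _ ⟨b, hb, rfl⟩ _ ⟨b', hb', rfl⟩ h
    rw [getLast?_bundlePath hF hb, getLast?_bundlePath hF hb', Option.some_inj] at h
    rw [eq_of_lastVert_eq hF hb hb' h]
  · ext v
    refine ⟨fun hv => ⟨_, ⟨v, hv, rfl⟩, head?_bundlePath hF hv⟩, ?_⟩
    rintro ⟨_, ⟨b, hb, rfl⟩, h⟩
    rw [head?_bundlePath hF hb, Option.some_inj] at h
    exact h ▸ hb
  · ext v
    refine ⟨?_, ?_⟩
    · rintro ⟨b, hb, rfl⟩
      exact ⟨_, ⟨b, hb, rfl⟩, getLast?_bundlePath hF hb⟩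
    · rintro ⟨_, ⟨b, hb, rfl⟩, h⟩
      rw [getLast?_bundlePath hF hb, Option.some_inj] at h
      exact ⟨b, hb, h⟩

end Linkage

theorem IsLinkage.mem_left_iff {α β : Set V} {P : Set (List V)} (hP : IsLinkage G α β P)
    {v : V} : v ∈ α ↔ ∃ l ∈ P, l.head? = some v := by
  rw [hP.2.2.2.2.1]
  rfl

theorem IsLinkage.mem_right_iff {α β : Set V} {P : Set (List V)} (hP : IsLinkage G α β P)
    {v : V} : v ∈ β ↔ ∃ l ∈ P, l.getLast? = some v := by
  rw [hP.2.2.2.2.2]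
  rfl

section Rigidity

variable [Fintype V] {B : Set V} {K : ℕ} {F : ℕ → Set (V × V)} {x b : V}
  {t : ℕ} {P : Set (List V)} {l : List V}

theorem whiteConn_of_mem_white_suffix (hP : IsLinkage G B (bundleEnds G B F x K) P)
    (hl : l ∈ P) {p S : List V} (hlS : l = p ++ S) (hS : ∀ z ∈ S, z ∉ expand B F t)
    {z : V} (hz : z ∈ S) :
    x ∉ expand B F t ∧ whiteConn G Set.univ (expand B F t) x z := by
  have hne : S ≠ [] := List.ne_nil_of_mem hz
  obtain ⟨b', hb', (he : lastVert G B F x b' K = S.getLast hne)⟩ :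
      S.getLast hne ∈ bundleEnds G B F x K :=
    hP.mem_right_iff.2 ⟨l, hl, by
      rw [hlS, List.getLast?_append_of_ne_nil _ hne, List.getLast?_eq_some_getLast]⟩
  obtain ⟨hx, hxe⟩ := whiteConn_lastVert_of_notMem hb' (he ▸ hS _ (List.getLast_mem hne))
  have hchain : S.IsChain G.Adj := (hP.1 l hl).2.2.suffix (hlS ▸ List.suffix_append p S)
  refine ⟨hx, (he ▸ hxe).trans (whiteConn_symm ?_)⟩
  exact whiteConn_getLast_of_isChain hchain (fun _ _ => trivial) hS hne z hz

variable [DecidableEq V]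

def IsWhiteExtension (G : SimpleGraph V) (B : Set V) (F : ℕ → Set (V × V)) (x : V) (t : ℕ)
    (b : V) (l : List V) : Prop :=
  ∃ S, l = bundlePath G B F x t b ++ S ∧ ∀ z ∈ S, z ∉ expand B F t

theorem head?_eq_lastVert_succ_of_ne (hF : RelaxedChron (PSDValid G Set.univ) Set.univ B K F)
    (hP : IsLinkage G B (bundleEnds G B F x K) P) (hl : l ∈ P) (hb : b ∈ B) {S : List V}
    (hlS : l = bundlePath G B F x t b ++ S) (hS : ∀ z ∈ S, z ∉ expand B F t)
    (hmv : lastVert G B F x b (t + 1) ≠ lastVert G B F x b t) :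
    S.head? = some (lastVert G B F x b (t + 1)) := by
  obtain ⟨hf, -, hxw⟩ := lastVert_succ_spec_of_ne hmv
  cases S with
  | nil =>
    obtain ⟨b', hb', he⟩ : lastVert G B F x b t ∈ bundleEnds G B F x K :=
      hP.mem_right_iff.2 ⟨l, hl, by rw [hlS, List.append_nil, getLast?_bundlePath hF hb]⟩
    obtain rfl := eq_of_lastVert_eq hF hb' hb he
    exact absurd (lastVert_eq_of_le_of_le hF hb t.le_succ (hF.le_of_mem hf) he.symm) hmv
  | cons s S =>
    have hadj : G.Adj (lastVert G B F x b t) s := by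
      have hchain := (hP.1 l hl).2.2
      rw [hlS] at hchain
      exact (List.isChain_append.1 hchain).2.2 _ (getLast?_bundlePath hF hb) _ rfl
    have hxs := (whiteConn_of_mem_white_suffix hP hl hlS hS List.mem_cons_self).2
    rw [(hF.valid_of_mem hf).2.2.2.2.2 s trivial hadj (hS s List.mem_cons_self)
      ((whiteConn_symm hxw).trans hxs)]
    rfl

theorem eq_lastVert_succ_of_mem (hF : RelaxedChron (PSDValid G Set.univ) Set.univ B K F)
    (hP : IsLinkage G B (bundleEnds G B F x K) P) (hx : x ∉ expand B F t)
    (hext : ∀ l ∈ P, ∀ b, l.head? = some b → IsWhiteExtension G B F x t b l)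
    (hl : l ∈ P) (hhead : l.head? = some b) {z : V} (hzl : z ∈ l) (hzt : z ∉ expand B F t)
    (hzt' : z ∈ expand B F (t + 1)) : z = lastVert G B F x b (t + 1) := by
  have hb : b ∈ B := hP.mem_left_iff.2 ⟨l, hl, hhead⟩
  obtain ⟨S, hlS, hS⟩ := hext l hl b hhead
  have hzS : z ∈ S := by
    rw [hlS, List.mem_append] at hzl
    refine hzl.resolve_left fun hz => hzt ?_
    obtain ⟨j, hj, rfl⟩ := mem_bundlePath.1 hz
    exact expand_mono hj (lastVert_mem_expand hb j)
  obtain ⟨u, hu⟩ : ∃ u, (u, z) ∈ F (t + 1) := hzt'.resolve_left hzt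
  obtain ⟨b', hb', hb't, hb't'⟩ := exists_lastVert_eq_of_mem hF hx hu
    (whiteConn_of_mem_white_suffix hP hl hlS hS hzS).2
  obtain ⟨l', hl', hhead'⟩ := hP.mem_left_iff.1 hb'
  obtain ⟨S', hl'S', hS'⟩ := hext l' hl' b' hhead'
  have hmv : lastVert G B F x b' (t + 1) ≠ lastVert G B F x b' t := fun h =>
    hzt (hb't' ▸ h ▸ lastVert_mem_expand hb' t)
  have hzl' : z ∈ l' := by
    have hhead'' := head?_eq_lastVert_succ_of_ne hF hP hl' hb' hl'S' hS' hmv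
    rw [hl'S']
    exact List.mem_append_right _ (List.mem_of_mem_head? (hb't' ▸ hhead''))
  obtain rfl : l' = l := by_contra fun hne => hP.2.1 l' hl' l hl hne z hzl' hzl
  rw [hhead', Option.some_inj] at hhead
  exact hhead ▸ hb't'.symm

theorem isWhiteExtension_zero (hP : IsLinkage G B (bundleEnds G B F x K) P) (hl : l ∈ P)
    (hhead : l.head? = some b) : IsWhiteExtension G B F x 0 b l := by
  obtain ⟨S, rfl⟩ := List.head?_eq_some_iff.1 hhead
  refine ⟨S, rfl, fun z hz hzB => ?_⟩
  obtain ⟨l', hl', hhead'⟩ := hP.mem_left_iff.1 hzB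
  obtain rfl : l' = b :: S := by_contra fun hne =>
    hP.2.1 l' hl' _ hl hne z (List.mem_of_mem_head? hhead') (List.mem_cons_of_mem _ hz)
  cases hhead'
  exact (List.nodup_cons.1 (hP.1 _ hl).2.1).1 hz

theorem isWhiteExtension_succ (hF : RelaxedChron (PSDValid G Set.univ) Set.univ B K F)
    (hP : IsLinkage G B (bundleEnds G B F x K) P) (hx : x ∉ expand B F t)
    (hext : ∀ l ∈ P, ∀ b, l.head? = some b → IsWhiteExtension G B F x t b l)
    (hl : l ∈ P) (hhead : l.head? = some b) : IsWhiteExtension G B F x (t + 1) b l := by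
  have hb : b ∈ B := hP.mem_left_iff.2 ⟨l, hl, hhead⟩
  obtain ⟨S, hlS, hS⟩ := hext l hl b hhead
  have hnew : ∀ z ∈ S, z ∈ expand B F (t + 1) → z = lastVert G B F x b (t + 1) :=
    fun z hz => eq_lastVert_succ_of_mem hF hP hx hext hl hhead
      (hlS ▸ List.mem_append_right _ hz) (hS z hz)
  by_cases hmv : lastVert G B F x b (t + 1) = lastVert G B F x b t
  · refine ⟨S, by rw [bundlePath_succ_of_eq hmv, hlS], fun z hz hzt => hS z hz ?_⟩
    rw [hnew z hz hzt, hmv]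
    exact lastVert_mem_expand hb t
  · obtain ⟨S', rfl⟩ :=
      List.head?_eq_some_iff.1 (head?_eq_lastVert_succ_of_ne hF hP hl hb hlS hS hmv)
    refine ⟨S', by rw [bundlePath_succ_of_ne hF hb hmv, hlS, List.append_assoc]; rfl,
      fun z hz hzt => ?_⟩
    have hnodup := (hP.1 l hl).2.1
    rw [hlS] at hnodup
    exact (List.nodup_cons.1 (hnodup.sublist (List.sublist_append_right _ _))).1
      (hnew z (List.mem_cons_of_mem _ hz) hzt ▸ hz)

theorem eq_bundlePath_of_mem (hF : RelaxedChron (PSDValid G Set.univ) Set.univ B K F)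
    (hP : IsLinkage G B (bundleEnds G B F x K) P) (hl : l ∈ P) (hhead : l.head? = some b) :
    l = bundlePath G B F x K b := by
  classical
  have hxK : x ∈ expand B F K := hF.complete trivial
  have hex : ∃ T, x ∈ expand B F T := ⟨K, hxK⟩
  have hext : ∀ t ≤ Nat.find hex, ∀ l ∈ P, ∀ b, l.head? = some b →
      IsWhiteExtension G B F x t b l := by
    intro t
    induction t with
    | zero => exact fun _ l hl b => isWhiteExtension_zero hP hl
    | succ t ih =>
      exact fun ht l hl b => isWhiteExtension_succ hF hP (Nat.find_min hex ht) (ih (by omega)) hl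
  obtain ⟨S, hlS, hS⟩ := hext _ le_rfl l hl b hhead
  obtain rfl : S = [] := List.eq_nil_iff_forall_not_mem.2 fun z hz =>
    (whiteConn_of_mem_white_suffix hP hl hlS hS hz).1 (Nat.find_spec hex)
  rw [hlS, List.append_nil, bundlePath_eq_of_mem_expand (Nat.find_spec hex) (Nat.find_min' hex hxK)]

theorem eq_bundle_of_isLinkage (hF : RelaxedChron (PSDValid G Set.univ) Set.univ B K F)
    (hP : IsLinkage G B (bundleEnds G B F x K) P) :
    P = (fun b => bundlePath G B F x K b) '' B := by
  ext l
  constructor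
  · intro hl
    obtain ⟨b, S, rfl⟩ := List.exists_cons_of_ne_nil (hP.1 l hl).1
    exact ⟨b, hP.mem_left_iff.2 ⟨_, hl, rfl⟩, (eq_bundlePath_of_mem hF hP hl rfl).symm⟩
  · rintro ⟨b, hb, rfl⟩
    obtain ⟨l, hl, hhead⟩ := hP.mem_left_iff.1 hb
    show bundlePath G B F x K b ∈ P
    rwa [← eq_bundlePath_of_mem hF hP hl hhead]

end Rigidity

end ZF

theorem bundle_isRigidLinkage_general {V : Type*} [Fintype V] [DecidableEq V]
    (G : SimpleGraph V) (B : Set V) (K : ℕ) (F : ℕ → Set (V × V))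
    (hF : ZF.RelaxedChron (ZF.PSDValid G Set.univ) Set.univ B K F) (x : V) :
    ZF.IsRigidLinkage G ((fun b => ZF.bundlePath G B F x K b) '' B) :=
  ⟨B, ZF.bundleEnds G B F x K, ZF.bundle_isLinkage hF,
    fun _ hP => ZF.eq_bundle_of_isLinkage hF hP⟩

/-- The path bundle of a relaxed chronology of PSD forces induced by a vertex `x`
is a rigid linkage of `G`. -/
theorem bundle_isRigidLinkage {V : Type*} [Fintype V] [DecidableEq V]
    (G : SimpleGraph V) (B : Set V) (K : ℕ) (F : ℕ → Set (V × V))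
    (hB : ZF.IsForcingSet (ZF.PSDValid G Set.univ) Set.univ B)
    (hF : ZF.RelaxedChron (ZF.PSDValid G Set.univ) Set.univ B K F) (x : V) :
    ZF.IsRigidLinkage G ((fun b => ZF.bundlePath G B F x K b) '' B) :=
  bundle_isRigidLinkage_general G B K F hF x
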